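/- Given p ∈ D_d and any selection σ, the extremal pmf f^σ belongs to P(p), its Shannon entropy satisfies H(f^σ) = −∑_{k=0}^d p_k log p_k (the entropy of p itself), and H(f) ≥ H(f^σ) for every f ∈ P(p); i.e., every extremal pmf minimizes the Shannon entropy over P(p). -/

import Mathlib

/-!
Grouping outcomes never increases entropy: inside a fibre every mass is at most the mass of the
whole fibre, so `∑ f x log f x ≤ (∑ f x) log (∑ f x)` fibrewise. Applied to the weight map this
gives `H(f) ≥ H(s(f)) = H(p)` for every `f ∈ P(p)`, while `f^σ`, which puts the whole mass `p_k` of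
the `k`-th fibre on the single point `σ(k)`, is a relabelling of `p` and so has `H(f^σ) = H(p)`.
-/
open Finset MeasureTheory Real

noncomputable section

/-- Weight of a binary vector: number of ones. -/
def wt {d : ℕ} (x : Fin d → Bool) : ℕ := (Finset.univ.filter (fun i => x i = true)).card

/-- The set `F_d` of `d`-variate Bernoulli pmfs. -/
def Fd (d : ℕ) : Set ((Fin d → Bool) → ℝ) :=
  {f | (∀ x, 0 ≤ f x) ∧ ∑ x, f x = 1}

/-- The simplex `D_d` of pmfs on `{0,…,d}`. -/
def Dd (d : ℕ) : Set (Fin (d + 1) → ℝ) :=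
  {p | (∀ k, 0 ≤ p k) ∧ ∑ k, p k = 1}

/-- The pmf of the sum of the coordinates: `s(f)_k = ∑_{x : w(x)=k} f(x)`. -/
def sumPmf {d : ℕ} (f : (Fin d → Bool) → ℝ) : Fin (d + 1) → ℝ :=
  fun k => ∑ x ∈ Finset.univ.filter (fun x : Fin d → Bool => wt x = (k : ℕ)), f x

/-- `P(p) = { f ∈ F_d : s(f) = p }`. -/
def Pp (d : ℕ) (p : Fin (d + 1) → ℝ) : Set ((Fin d → Bool) → ℝ) :=
  {f | f ∈ Fd d ∧ sumPmf f = p}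

/-- A selection: `σ(k)` is a binary vector of weight `k` for each `k`. -/
def IsSelection {d : ℕ} (σ : Fin (d + 1) → (Fin d → Bool)) : Prop :=
  ∀ k, wt (σ k) = (k : ℕ)

/-- The extremal pmf `f^σ`: mass `p_k` at `σ(k)`, zero elsewhere. -/
def extPmf {d : ℕ} (p : Fin (d + 1) → ℝ) (σ : Fin (d + 1) → (Fin d → Bool)) :
    (Fin d → Bool) → ℝ :=
  fun x => ∑ k, if σ k = x then p k else 0

/-- Shannon entropy of a pmf on a finite set (with the convention `0 · log 0 = 0`,
which holds automatically since `Real.log 0 = 0`). -/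
def entropy {S : Type*} [Fintype S] (g : S → ℝ) : ℝ := -∑ s, g s * Real.log (g s)

theorem sum_mul_log_le_sum_mul_log_sum {ι : Type*} (s : Finset ι) {f : ι → ℝ}
    (hf : ∀ i ∈ s, 0 ≤ f i) :
    ∑ i ∈ s, f i * log (f i) ≤ (∑ i ∈ s, f i) * log (∑ i ∈ s, f i) := by
  rw [sum_mul]
  refine sum_le_sum fun i hi => ?_
  rcases (hf i hi).eq_or_lt with hzero | hpos
  · simp [← hzero]
  · exact mul_le_mul_of_nonneg_left (log_le_log hpos (single_le_sum hf hi)) hpos.le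

theorem entropy_fiberwise_le {S T : Type*} [Fintype S] [Fintype T] [DecidableEq T]
    (g : S → T) {f : S → ℝ} (hf : ∀ x, 0 ≤ f x) :
    entropy (fun t => ∑ x with g x = t, f x) ≤ entropy f := by
  rw [entropy, entropy, neg_le_neg_iff, ← sum_fiberwise univ g (fun x => f x * log (f x))]
  exact sum_le_sum fun t _ => sum_mul_log_le_sum_mul_log_sum _ fun x _ => hf x

section

variable {d : ℕ}

theorem wt_le (x : Fin d → Bool) : wt x ≤ d :=
  (card_filter_le _ _).trans (by simp)

def wtFin (x : Fin d → Bool) : Fin (d + 1) := ⟨wt x, Nat.lt_succ_of_le (wt_le x)⟩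

theorem sumPmf_eq_fiberwise (f : (Fin d → Bool) → ℝ) :
    sumPmf f = fun k => ∑ x with wtFin x = k, f x := by
  funext k
  simp only [sumPmf, wtFin, Fin.ext_iff]

theorem entropy_sumPmf_le {f : (Fin d → Bool) → ℝ} (hf : ∀ x, 0 ≤ f x) :
    entropy (sumPmf f) ≤ entropy f := by
  rw [sumPmf_eq_fiberwise]
  exact entropy_fiberwise_le wtFin hf

theorem IsSelection.injective {σ : Fin (d + 1) → (Fin d → Bool)} (hσ : IsSelection σ) :
    Function.Injective σ :=
  fun a b h => Fin.ext (by rw [← hσ a, ← hσ b, h])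

section extPmf

variable {p : Fin (d + 1) → ℝ} {σ : Fin (d + 1) → (Fin d → Bool)}

theorem extPmf_nonneg (hp : ∀ k, 0 ≤ p k) (x : Fin d → Bool) : 0 ≤ extPmf p σ x :=
  sum_nonneg fun k _ => by split_ifs <;> simp [hp k]

theorem sum_extPmf : ∑ x, extPmf p σ x = ∑ k, p k := by
  simp only [extPmf]
  rw [sum_comm]
  simp

theorem extPmf_apply_self (hσ : Function.Injective σ) (k : Fin (d + 1)) :
    extPmf p σ (σ k) = p k := by
  simp [extPmf, hσ.eq_iff]

theorem extPmf_eq_zero_of_notMem_range {x : Fin d → Bool} (hx : x ∉ Set.range σ) :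
    extPmf p σ x = 0 :=
  sum_eq_zero fun k _ => if_neg fun h => hx ⟨k, h⟩

theorem entropy_extPmf (hσ : Function.Injective σ) : entropy (extPmf p σ) = entropy p := by
  rw [entropy, entropy, Fintype.sum_of_injective σ hσ (fun k => p k * log (p k))]
  · intro x hx
    simp [extPmf_eq_zero_of_notMem_range hx]
  · intro k
    rw [extPmf_apply_self hσ]

theorem sumPmf_extPmf (hσ : IsSelection σ) : sumPmf (extPmf p σ) = p := by
  funext k
  simp only [sumPmf, extPmf]
  rw [sum_comm]
  simp [hσ _, ← Fin.ext_iff]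

end extPmf

end

theorem extremal_minimizes_entropy_general (d : ℕ) (p : Fin (d + 1) → ℝ)
    (hp : p ∈ Dd d) (σ : Fin (d + 1) → (Fin d → Bool)) (hσ : IsSelection σ) :
    extPmf p σ ∈ Pp d p ∧
      entropy (extPmf p σ) = -∑ k, p k * Real.log (p k) ∧
      ∀ f ∈ Pp d p, entropy (extPmf p σ) ≤ entropy f := by
  obtain ⟨hp_nonneg, hp_sum⟩ := hp
  refine ⟨⟨⟨extPmf_nonneg hp_nonneg, sum_extPmf.trans hp_sum⟩, sumPmf_extPmf hσ⟩,
    entropy_extPmf hσ.injective, ?_⟩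
  rintro f ⟨⟨hf_nonneg, -⟩, hf_sum⟩
  calc entropy (extPmf p σ) = entropy p := entropy_extPmf hσ.injective
    _ = entropy (sumPmf f) := by rw [hf_sum]
    _ ≤ entropy f := entropy_sumPmf_le hf_nonneg

/-- each extremal pmf `f^σ` belongs to `P(p)`, has entropy equal to the
entropy of `p`, and minimizes the Shannon entropy over `P(p)`. -/
theorem extremal_minimizes_entropy (d : ℕ) (hd : 1 ≤ d) (p : Fin (d + 1) → ℝ)
    (hp : p ∈ Dd d) (σ : Fin (d + 1) → (Fin d → Bool)) (hσ : IsSelection σ) :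
    extPmf p σ ∈ Pp d p ∧
      entropy (extPmf p σ) = -∑ k, p k * Real.log (p k) ∧
      ∀ f ∈ Pp d p, entropy (extPmf p σ) ≤ entropy f :=
  extremal_minimizes_entropy_general d p hp σ hσ
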